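/- If h is a strictly increasing apart sequence of positive naturals and one forms the sequence h' given by h' n = h(2n) + h(2n+1) (sums of consecutive disjoint pairs), then h' is strictly increasing, apart, no element of h' is a power of 2, and every adjacent sum of h' is an adjacent sum of h. -/

import Mathlib

/-- λ(n): the 2-adic valuation of n (least exponent in binary expansion). -/
def lam (n : ℕ) : ℕ := padicValNat 2 n

/-- μ(n): ⌊log₂ n⌋ (greatest exponent in binary expansion). -/
def mu (n : ℕ) : ℕ := Nat.log 2 n

/-- Apartness condition for a sequence. -/
def Apart (h : ℕ → ℕ) : Prop := ∀ i j, i < j → mu (h i) < lam (h j)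

/-- Sum of adjacent elements h i + h (i+1) + ... + h j. -/
def adjSum (h : ℕ → ℕ) (i j : ℕ) : ℕ := ∑ t ∈ Finset.Icc i j, h t

/-!
If `μ(a) < λ(b)` then the binary digits of `a` all lie strictly below those of `b`, so `a + b`
is their disjoint union: `λ(a + b) = λ(a)` and `μ(a + b) = μ(b)`. Applied to consecutive pairs of
an apart sequence this gives `λ(h'ₙ) = λ(h₂ₙ)` and `μ(h'ₙ) = μ(h₂ₙ₊₁)`, from which apartness of
`h'` is inherited, and `λ(h'ₙ) ≤ μ(h₂ₙ) < λ(h₂ₙ₊₁) ≤ μ(h'ₙ)` shows `h'ₙ` is not a power of two.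
-/

lemma lam_pow_two (t : ℕ) : lam (2 ^ t) = t := padicValNat.prime_pow t

lemma mu_pow_two (t : ℕ) : mu (2 ^ t) = t := Nat.log_pow one_lt_two t

lemma lam_le_mu {n : ℕ} (hn : n ≠ 0) : lam n ≤ mu n :=
  Nat.le_log_of_pow_le one_lt_two (Nat.le_of_dvd (Nat.pos_of_ne_zero hn) pow_padicValNat_dvd)

lemma ne_zero_of_mu_lt_lam {a b : ℕ} (hab : mu a < lam b) : b ≠ 0 := by
  rintro rfl
  simp [lam] at hab

section DisjointDigits

variable {a b : ℕ}

lemma lam_add_of_mu_lt_lam (ha : a ≠ 0) (hab : mu a < lam b) : lam (a + b) = lam a := by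
  have hlt : lam a < lam b := (lam_le_mu ha).trans_lt hab
  have hb : 2 ^ (lam a + 1) ∣ b := (pow_dvd_pow 2 hlt).trans pow_padicValNat_dvd
  apply le_antisymm
  · by_contra! hgt
    have hsum : 2 ^ (lam a + 1) ∣ a + b := (pow_dvd_pow 2 hgt).trans pow_padicValNat_dvd
    exact pow_succ_padicValNat_not_dvd ha ((Nat.dvd_add_left hb).mp hsum)
  · exact (padicValNat_dvd_iff_le (by omega)).mp
      (dvd_add pow_padicValNat_dvd ((pow_dvd_pow 2 hlt.le).trans pow_padicValNat_dvd))

lemma mu_add_of_mu_lt_lam (hab : mu a < lam b) : mu (a + b) = mu b := by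
  have hb := ne_zero_of_mu_lt_lam hab
  have ha : a < 2 ^ lam b :=
    (Nat.lt_pow_succ_log_self one_lt_two a).trans_le (Nat.pow_le_pow_right two_pos hab)
  -- `b` and `2 ^ (μ b + 1) > b` are both multiples of `2 ^ λ b`.
  have hgap : 2 ^ lam b ≤ 2 ^ (mu b + 1) - b := by
    have hb_lt : b < 2 ^ (mu b + 1) := Nat.lt_pow_succ_log_self one_lt_two b
    refine Nat.le_of_dvd (by omega) (Nat.dvd_sub ?_ pow_padicValNat_dvd)
    exact pow_dvd_pow 2 ((lam_le_mu hb).trans (Nat.le_succ _))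
  have hb_ge : 2 ^ mu b ≤ b := Nat.pow_log_le_self 2 hb
  exact Nat.log_eq_of_pow_le_of_lt_pow (by omega) (by omega)

lemma add_ne_two_pow_of_mu_lt_lam (ha : a ≠ 0) (hab : mu a < lam b) (t : ℕ) :
    a + b ≠ 2 ^ t := by
  intro h
  have hlam := lam_add_of_mu_lt_lam ha hab
  have hmu := mu_add_of_mu_lt_lam hab
  rw [h, lam_pow_two] at hlam
  rw [h, mu_pow_two] at hmu
  have := lam_le_mu ha
  have := lam_le_mu (ne_zero_of_mu_lt_lam hab)
  omega

end DisjointDigits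

def pairSums (h : ℕ → ℕ) (n : ℕ) : ℕ := h (2 * n) + h (2 * n + 1)

lemma StrictMono.pairSums {h : ℕ → ℕ} (hh : StrictMono h) : StrictMono (pairSums h) := by
  intro a b hab
  have h₁ : h (2 * a) < h (2 * b) := hh (by omega)
  have h₂ : h (2 * a + 1) < h (2 * b + 1) := hh (by omega)
  exact Nat.add_lt_add h₁ h₂

section Apart

variable {h : ℕ → ℕ}

lemma Apart.mu_lt_lam_pair (hap : Apart h) (n : ℕ) : mu (h (2 * n)) < lam (h (2 * n + 1)) :=
  hap _ _ (by omega)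

lemma Apart.lam_pairSums (hap : Apart h) (hpos : ∀ i, 0 < h i) (n : ℕ) :
    lam (pairSums h n) = lam (h (2 * n)) :=
  lam_add_of_mu_lt_lam (hpos _).ne' (hap.mu_lt_lam_pair n)

lemma Apart.mu_pairSums (hap : Apart h) (n : ℕ) : mu (pairSums h n) = mu (h (2 * n + 1)) :=
  mu_add_of_mu_lt_lam (hap.mu_lt_lam_pair n)

lemma Apart.pairSums_ne_two_pow (hap : Apart h) (hpos : ∀ i, 0 < h i) (n t : ℕ) :
    pairSums h n ≠ 2 ^ t :=
  add_ne_two_pow_of_mu_lt_lam (hpos _).ne' (hap.mu_lt_lam_pair n) t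

lemma Apart.pairSums (hap : Apart h) (hpos : ∀ i, 0 < h i) : Apart (pairSums h) := by
  intro i j hij
  rw [hap.mu_pairSums, hap.lam_pairSums hpos]
  exact hap _ _ (by omega)

end Apart

lemma sum_Ico_pairSums (h : ℕ → ℕ) {i j : ℕ} (hij : i ≤ j) :
    ∑ t ∈ Finset.Ico i j, pairSums h t = ∑ t ∈ Finset.Ico (2 * i) (2 * j), h t := by
  induction j, hij using Nat.le_induction with
  | base => simp
  | succ j hij ih =>
    rw [Finset.sum_Ico_succ_top hij, ih, show 2 * (j + 1) = 2 * j + 1 + 1 by ring,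
      Finset.sum_Ico_succ_top (by omega), Finset.sum_Ico_succ_top (by omega), pairSums, add_assoc]

lemma adjSum_pairSums (h : ℕ → ℕ) {i j : ℕ} (hij : i ≤ j) :
    adjSum (pairSums h) i j = adjSum h (2 * i) (2 * j + 1) := by
  rw [adjSum, adjSum, ← Finset.Ico_add_one_right_eq_Icc, ← Finset.Ico_add_one_right_eq_Icc,
    sum_Ico_pairSums h (by omega)]
  ring_nf

theorem paired_sequence_properties (h : ℕ → ℕ) (hmono : StrictMono h)
    (hpos : ∀ i, 0 < h i) (hap : Apart h) :
    let h' : ℕ → ℕ := fun n => h (2 * n) + h (2 * n + 1)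
    StrictMono h' ∧ Apart h' ∧ (∀ n, ¬∃ t, h' n = 2 ^ t) ∧
      ∀ i j, i ≤ j → ∃ p q, p ≤ q ∧ adjSum h' i j = adjSum h p q := by
  refine ⟨hmono.pairSums, hap.pairSums hpos, ?_, ?_⟩
  · rintro n ⟨t, ht⟩
    exact hap.pairSums_ne_two_pow hpos n t ht
  · intro i j hij
    exact ⟨2 * i, 2 * j + 1, by omega, adjSum_pairSums h hij⟩
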